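/- arXiv:1011.1570 — 5 statements merged into one kernel-verified Lean document; each statement's English description precedes it below -/
import Mathlib

section
/- Let n ≥ 2 be an integer and let a₁, …, aₙ be nonnegative real numbers. Then (∏_{i=1}^n a_i)^{1/n} ≤ (1/n)·∑_{i=1}^n a_i − (1/(n(n−1)))·∑_{1 ≤ i < j ≤ n} (√a_i − √a_j)². -/
/-!
Put `bᵢ = √aᵢ`. Lagrange's identity `∑_{i<j} (bᵢ - bⱼ)² = n ∑ bᵢ² - (∑ bᵢ)²` turns the right-hand
side into the arithmetic mean of the `n(n-1)` products `bᵢ bⱼ`, `i ≠ j`, whose geometric mean is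
`(∏ aᵢ)^{1/n}` because each `bᵢ` occurs `2(n-1)` times; so the claim is AM-GM for these products.
-/

open Finset

theorem Real.prod_rpow_inv_card_le_sum_div_card {ι : Type*} (s : Finset ι) (hs : s.Nonempty)
    (z : ι → ℝ) (hz : ∀ i ∈ s, 0 ≤ z i) :
    (∏ i ∈ s, z i) ^ (#s : ℝ)⁻¹ ≤ (∑ i ∈ s, z i) / #s := by
  simpa using Real.geom_mean_le_arith_mean s 1 z (fun _ _ => zero_le_one) (by simpa) hz

namespace Finset

variable {α M : Type*}

theorem offDiag_eq_filter_product [DecidableEq α] (s : Finset α) :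
    s.offDiag = (s ×ˢ s).filter (fun p => p.1 ≠ p.2) := by
  ext
  simp [and_assoc]

theorem prod_offDiag_fst [DecidableEq α] [CommMonoid M] (s : Finset α) (f : α → M) :
    ∏ p ∈ s.offDiag, f p.1 = ∏ i ∈ s, f i ^ (#s - 1) := by
  rw [offDiag_eq_filter_product, prod_filter, prod_product]
  refine prod_congr rfl fun i hi => ?_
  rw [← prod_filter, filter_ne]
  simp [card_erase_of_mem hi]

theorem prod_offDiag_swap [CommMonoid M] (s : Finset α) (f : α × α → M) :
    ∏ p ∈ s.offDiag, f p.swap = ∏ p ∈ s.offDiag, f p :=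
  prod_nbij' Prod.swap Prod.swap (by simp [eq_comm]; tauto) (by simp [eq_comm]; tauto)
    (by simp) (by simp) (by simp)

theorem prod_offDiag_mul [DecidableEq α] [CommMonoid M] (s : Finset α) (f : α → M) :
    ∏ p ∈ s.offDiag, f p.1 * f p.2 = (∏ i ∈ s, f i) ^ (2 * (#s - 1)) := by
  have h := prod_offDiag_swap s (fun p => f p.1)
  simp only [Prod.fst_swap] at h
  rw [prod_mul_distrib, h, prod_offDiag_fst, prod_pow, ← pow_add, two_mul]

theorem sum_offDiag_mul [DecidableEq α] [CommRing M] (s : Finset α) (f : α → M) :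
    ∑ p ∈ s.offDiag, f p.1 * f p.2 = (∑ i ∈ s, f i) ^ 2 - ∑ i ∈ s, f i ^ 2 := by
  rw [eq_sub_iff_add_eq, sq, sum_mul_sum, ← sum_product', ← diag_union_offDiag,
    sum_union (disjoint_diag_offDiag s), sum_diag]
  simp [sq, add_comm]

theorem sum_sum_eq_two_nsmul_sum_sum_ite_lt_add_sum_diag [LinearOrder α] [AddCommMonoid M]
    (s : Finset α) (f : α → α → M) (hf : ∀ i j, f i j = f j i) :
    ∑ i ∈ s, ∑ j ∈ s, f i j =
      2 • ∑ i ∈ s, ∑ j ∈ s, (if i < j then f i j else 0) + ∑ i ∈ s, f i i := by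
  have split : ∀ i j, f i j =
      (if i < j then f i j else 0) + (if j < i then f j i else 0) +
        (if i = j then f i j else 0) := by
    intro i j
    rcases lt_trichotomy i j with h | rfl | h
    · simp [h, h.not_gt, h.ne]
    · simp
    · simp [h, h.not_gt, h.ne', hf i j]
  calc ∑ i ∈ s, ∑ j ∈ s, f i j
      = ∑ i ∈ s, ∑ j ∈ s, ((if i < j then f i j else 0) + (if j < i then f j i else 0) +
          (if i = j then f i j else 0)) :=
        sum_congr rfl fun i _ => sum_congr rfl fun j _ => split i j
    _ = _ := by
        rw [two_nsmul]
        simp only [sum_add_distrib, sum_ite_eq]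
        rw [sum_comm (f := fun i j => if j < i then f j i else 0)]
        exact congrArg _ (sum_congr rfl fun i hi => if_pos hi)

theorem sum_sum_ite_lt_sub_sq [LinearOrder α] [CommRing M] [NoZeroDivisors M] [CharZero M]
    (s : Finset α) (b : α → M) :
    ∑ i ∈ s, ∑ j ∈ s, (if i < j then (b i - b j) ^ 2 else 0) =
      #s * ∑ i ∈ s, b i ^ 2 - (∑ i ∈ s, b i) ^ 2 := by
  have hsym := sum_sum_eq_two_nsmul_sum_sum_ite_lt_add_sum_diag s (fun i j => (b i - b j) ^ 2)
    fun i j => by ring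
  have hexp : ∑ i ∈ s, ∑ j ∈ s, (b i - b j) ^ 2 =
      2 * (#s * ∑ i ∈ s, b i ^ 2 - (∑ i ∈ s, b i) ^ 2) := by
    simp only [sub_sq, sum_add_distrib, sum_sub_distrib, sum_const, ← mul_sum, ← sum_mul,
      nsmul_eq_mul]
    ring
  simp only [sub_self, zero_pow two_ne_zero, sum_const_zero, add_zero, hexp, two_nsmul,
    ← two_mul] at hsym
  exact (mul_left_cancel₀ two_ne_zero hsym).symm

end Finset

/-- Quantitative arithmetic–geometric mean inequality: for `n ≥ 2` nonnegative reals,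
`(∏ aᵢ)^{1/n} ≤ (1/n)·∑ aᵢ − (1/(n(n−1)))·∑_{i<j} (√aᵢ − √aⱼ)²`. -/
theorem quantitative_am_gm (n : ℕ) (hn : 2 ≤ n) (a : Fin n → ℝ) (ha : ∀ i, 0 ≤ a i) :
    (∏ i, a i) ^ ((1 : ℝ) / n) ≤
      (1 / (n : ℝ)) * ∑ i, a i -
        (1 / ((n : ℝ) * ((n : ℝ) - 1))) *
          ∑ i, ∑ j, (if i < j then (Real.sqrt (a i) - Real.sqrt (a j)) ^ 2 else 0) := by
  have hb : ∀ i, √(a i) ^ 2 = a i := fun i => Real.sq_sqrt (ha i)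
  have hn0 : (n : ℝ) ≠ 0 := by positivity
  have hn1 : (n : ℝ) - 1 ≠ 0 := sub_ne_zero.2 (by exact_mod_cast (by omega : n ≠ 1))
  have hcard : (#(univ : Finset (Fin n)).offDiag : ℝ) = n * (n - 1) := by
    rw [offDiag_card, card_univ, Fintype.card_fin, Nat.cast_sub (Nat.le_mul_self n)]
    push_cast
    ring
  have hP : (univ : Finset (Fin n)).offDiag.Nonempty :=
    ⟨(⟨0, by omega⟩, ⟨1, by omega⟩), by simp [Fin.ext_iff]⟩
  calc (∏ i, a i) ^ ((1 : ℝ) / n)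
      = (∏ p ∈ univ.offDiag, √(a p.1) * √(a p.2)) ^ (#univ.offDiag : ℝ)⁻¹ := by
        rw [prod_offDiag_mul _ fun i => √(a i), pow_mul, ← prod_pow, hcard]
        simp only [hb, card_univ, Fintype.card_fin]
        rw [← Real.rpow_natCast, ← Real.rpow_mul (prod_nonneg fun i _ => ha i),
          Nat.cast_sub (by omega), Nat.cast_one]
        field_simp
    _ ≤ (∑ p ∈ univ.offDiag, √(a p.1) * √(a p.2)) / #univ.offDiag :=
        Real.prod_rpow_inv_card_le_sum_div_card _ hP _ fun _ _ => by positivity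
    _ = _ := by
        rw [sum_offDiag_mul _ fun i => √(a i), sum_sum_ite_lt_sub_sq, hcard]
        simp only [hb, card_univ, Fintype.card_fin]
        field_simp
        ring
end

section
/- Let n ≥ 2 be an integer and let a₁, …, aₙ be real numbers with 0 ≤ a_i ≤ n for all i. Set m = (1/n)·∑_{i=1}^n a_i. Then for every index j ∈ {1, …, n}, (∏_{i=1}^n a_i)^{1/n} ≤ m − (1/(4n(n−1)))·(a_j − m)². -/
/-!
Write `t = aⱼ` and `s` for the mean of the other `n - 1` entries, so `m = t/n + (1 - 1/n) s`.
AM–GM on those entries bounds the geometric mean by `t^(1/n) s^(1-1/n)`. Rewriting this as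
`(√t √s)^(2/n) s^(1-2/n)`, two-term AM–GM bounds it by `m - (√t - √s)²/n`. Finally
`aⱼ - m = (1 - 1/n)(t - s)` and `t - s = (√t - √s)(√t + √s)` with `(√t + √s)² ≤ 4n`,
which accounts for the constant `1/(4n(n-1))`.
-/

open Finset

namespace Real

theorem sq_sub_le_mul_sq_sqrt_sub {t s c : ℝ} (ht : 0 ≤ t) (hs : 0 ≤ s) (htc : t ≤ c)
    (hsc : s ≤ c) : (t - s) ^ 2 ≤ 4 * c * (√t - √s) ^ 2 := by
  have hsq : t - s = √t ^ 2 - √s ^ 2 := by rw [sq_sqrt ht, sq_sqrt hs]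
  have hsum : (√t + √s) ^ 2 ≤ 4 * c := by
    nlinarith [sq_nonneg (√t - √s), sq_sqrt ht, sq_sqrt hs]
  calc (t - s) ^ 2 = (√t - √s) ^ 2 * (√t + √s) ^ 2 := by rw [hsq]; ring
    _ ≤ (√t - √s) ^ 2 * (4 * c) := by gcongr
    _ = 4 * c * (√t - √s) ^ 2 := by ring

theorem rpow_mul_rpow_le_sub_sq_sqrt_sub {w t s : ℝ} (hw₀ : 0 ≤ w) (hw : w ≤ 1 / 2)
    (ht : 0 ≤ t) (hs : 0 ≤ s) :
    t ^ w * s ^ (1 - w) ≤ w * t + (1 - w) * s - w * (√t - √s) ^ 2 := by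
  have hsplit : t ^ w * s ^ (1 - w) = (√t * √s) ^ (2 * w) * s ^ (1 - 2 * w) := by
    rw [mul_rpow (sqrt_nonneg t) (sqrt_nonneg s), rpow_mul (sqrt_nonneg t),
      rpow_mul (sqrt_nonneg s), rpow_two, rpow_two, sq_sqrt ht, sq_sqrt hs, mul_assoc,
      ← rpow_add_of_nonneg hs hw₀ (by linarith)]
    ring_nf
  have hamgm := geom_mean_le_arith_mean2_weighted (by linarith : 0 ≤ 2 * w)
    (by linarith : 0 ≤ 1 - 2 * w) (mul_nonneg (sqrt_nonneg t) (sqrt_nonneg s)) hs (by ring)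
  rw [hsplit]
  linear_combination hamgm + w * sq_sqrt ht + w * sq_sqrt hs

theorem geom_mean_le_arith_mean_unweighted {ι : Type*} {s : Finset ι} (hs : s.Nonempty)
    {a : ι → ℝ} (ha : ∀ i ∈ s, 0 ≤ a i) :
    (∏ i ∈ s, a i) ^ (1 / (#s : ℝ)) ≤ (∑ i ∈ s, a i) / #s := by
  simpa [one_div] using
    geom_mean_le_arith_mean s (fun _ ↦ 1) a (fun _ _ ↦ zero_le_one) (by simpa using hs) ha

theorem geom_mean_le_rpow_mul_mean_erase_rpow {ι : Type*} [Fintype ι] [DecidableEq ι]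
    {a : ι → ℝ} (ha : ∀ i, 0 ≤ a i) (j : ι) (hι : 2 ≤ Fintype.card ι) :
    (∏ i, a i) ^ (1 / (Fintype.card ι : ℝ)) ≤
      a j ^ (1 / (Fintype.card ι : ℝ)) *
        ((∑ i ∈ univ.erase j, a i) / (Fintype.card ι - 1)) ^
          (1 - 1 / (Fintype.card ι : ℝ)) := by
  have hcard : #(univ.erase j) = Fintype.card ι - 1 := by
    rw [card_erase_of_mem (mem_univ j), card_univ]
  have hn : (2 : ℝ) ≤ Fintype.card ι := by exact_mod_cast hι
  have hP₀ : 0 ≤ ∏ i ∈ univ.erase j, a i := prod_nonneg fun i _ ↦ ha i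
  have hP :=
    geom_mean_le_arith_mean_unweighted (card_pos.1 (by rw [hcard]; omega)) (fun i _ ↦ ha i)
  rw [hcard, Nat.cast_pred (by omega)] at hP
  have hw : 0 ≤ 1 - 1 / (Fintype.card ι : ℝ) := by
    rw [sub_nonneg, div_le_one (by linarith)]; linarith
  have hexp :
      1 / (Fintype.card ι : ℝ) = 1 / (Fintype.card ι - 1) * (1 - 1 / Fintype.card ι) := by
    have : (Fintype.card ι : ℝ) - 1 ≠ 0 := by linarith
    field_simp
  rw [← mul_prod_erase univ a (mem_univ j), mul_rpow (ha j) hP₀, hexp, rpow_mul hP₀, ← hexp]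
  gcongr
  exact rpow_nonneg (ha j) _

end Real

open Real in
theorem inv_mul_sq_sub_weighted_mean_le {n t s : ℝ} (hn : 1 < n) (ht : 0 ≤ t) (hs : 0 ≤ s)
    (htn : t ≤ n) (hsn : s ≤ n) :
    1 / (4 * n * (n - 1)) * (t - (1 / n * t + (1 - 1 / n) * s)) ^ 2 ≤
      1 / n * (√t - √s) ^ 2 := by
  have hn₀ : 0 < n := by linarith
  have hn₁ : 0 < n - 1 := by linarith
  calc 1 / (4 * n * (n - 1)) * (t - (1 / n * t + (1 - 1 / n) * s)) ^ 2
      = (n - 1) / (4 * n ^ 3) * (t - s) ^ 2 := by field_simp; ring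
    _ ≤ (n - 1) / (4 * n ^ 3) * (4 * n * (√t - √s) ^ 2) := by
      gcongr; exact sq_sub_le_mul_sq_sqrt_sub ht hs htn hsn
    _ = (n - 1) / n * (1 / n * (√t - √s) ^ 2) := by field_simp
    _ ≤ 1 / n * (√t - √s) ^ 2 := by
      refine mul_le_of_le_one_left (by positivity) ?_
      rw [div_le_one hn₀]; linarith

/-- Refined AM–GM inequality (display (j2) in the paper): if `0 ≤ aᵢ ≤ n` and
`m = (1/n)·∑ aᵢ`, then for every index `j`,
`(∏ aᵢ)^{1/n} ≤ m − (1/(4n(n−1)))·(aⱼ − m)²`. -/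
theorem refined_am_gm (n : ℕ) (hn : 2 ≤ n) (a : Fin n → ℝ)
    (ha₀ : ∀ i, 0 ≤ a i) (ha₁ : ∀ i, a i ≤ n) (j : Fin n) :
    (∏ i, a i) ^ ((1 : ℝ) / n) ≤
      (1 / (n : ℝ)) * ∑ i, a i -
        (1 / (4 * (n : ℝ) * ((n : ℝ) - 1))) * (a j - (1 / (n : ℝ)) * ∑ i, a i) ^ 2 := by
  have hn' : (2 : ℝ) ≤ n := by exact_mod_cast hn
  set s := (∑ i ∈ univ.erase j, a i) / (n - 1) with hs
  have hs₀ : 0 ≤ s := div_nonneg (sum_nonneg fun i _ ↦ ha₀ i) (by linarith)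
  have hsn : s ≤ n := by
    rw [hs, div_le_iff₀ (by linarith)]
    calc ∑ i ∈ univ.erase j, a i ≤ #(univ.erase j) • (n : ℝ) :=
          sum_le_card_nsmul _ _ _ fun i _ ↦ ha₁ i
      _ = n * (n - 1) := by
        rw [card_erase_of_mem (mem_univ j), card_univ, Fintype.card_fin, nsmul_eq_mul,
          Nat.cast_pred (by omega)]
        ring
  have hmean : 1 / (n : ℝ) * ∑ i, a i = 1 / n * a j + (1 - 1 / n) * s := by
    have : (n : ℝ) - 1 ≠ 0 := by linarith
    rw [← add_sum_erase univ a (mem_univ j), hs]; field_simp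
  have hsplit := Real.geom_mean_le_rpow_mul_mean_erase_rpow ha₀ j (by simpa using hn)
  simp only [Fintype.card_fin] at hsplit
  rw [hmean]
  calc (∏ i, a i) ^ ((1 : ℝ) / n) ≤ a j ^ (1 / (n : ℝ)) * s ^ (1 - 1 / (n : ℝ)) := hsplit
    _ ≤ 1 / n * a j + (1 - 1 / n) * s - 1 / n * (√(a j) - √s) ^ 2 :=
      Real.rpow_mul_rpow_le_sub_sq_sqrt_sub (by positivity)
        (by rw [div_le_div_iff₀] <;> linarith) (ha₀ j) hs₀
    _ ≤ _ := by
      have := inv_mul_sq_sub_weighted_mean_le (by linarith) (ha₀ j) hs₀ (ha₁ j) hsn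
      linarith
end

section
/- Let (Ω, μ) be a probability space, n ≥ 1 an integer, and V : Ω → ℝⁿ a measurable map with Euclidean norm ‖V(ω)‖ = 1 for μ-almost every ω. Let δ₁, …, δₙ be real-valued square-integrable functions on Ω that are orthonormal with respect to the inner product ⟨f, g⟩ := n·∫_Ω f·g dμ, i.e. n·∫_Ω δ_i·δ_j dμ equals 1 if i = j and 0 otherwise. Define the n×n matrix A by A_{ij} = n·∫_Ω δ_i(ω)·V_j(ω) dμ(ω), where V_j is the j-th coordinate of V. Then |det A| ≤ 1. -/
/-!
With `ν = n • μ` the hypotheses say that the `δᵢ` are orthonormal in `L²(ν)` and that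
`A i j = ∫ δᵢ Vⱼ dν`. Bessel's inequality, applied to each coordinate `Vⱼ`, bounds the squared
Frobenius norm of `A` by `∫ ‖V‖² dν = n`. Since `det (A Aᵀ)` is the product of the eigenvalues of
`A Aᵀ` and their sum is the squared Frobenius norm, AM-GM gives `det A ^ 2 ≤ (n / n) ^ n = 1`.
-/

open MeasureTheory Finset Matrix

theorem Real.prod_le_sum_div_card_pow {ι : Type*} (s : Finset ι) {z : ι → ℝ}
    (hz : ∀ i ∈ s, 0 ≤ z i) : ∏ i ∈ s, z i ≤ ((∑ i ∈ s, z i) / #s) ^ #s := by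
  rcases s.eq_empty_or_nonempty with rfl | hs
  · simp
  have hcard : (0 : ℝ) < #s := by exact_mod_cast hs.card_pos
  have hamgm : ∏ i ∈ s, z i ^ (1 / (#s : ℝ)) ≤ ∑ i ∈ s, 1 / (#s : ℝ) * z i :=
    Real.geom_mean_le_arith_mean_weighted s _ z (fun _ _ => by positivity)
      (by simp [hcard.ne']) hz
  calc ∏ i ∈ s, z i = (∏ i ∈ s, z i ^ (1 / (#s : ℝ))) ^ #s := by
        rw [← prod_pow]
        refine prod_congr rfl fun i hi => ?_
        rw [← Real.rpow_mul_natCast (hz i hi), one_div_mul_cancel hcard.ne', Real.rpow_one]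
    _ ≤ ((∑ i ∈ s, z i) / #s) ^ #s := by
        gcongr
        · exact prod_nonneg fun i hi => Real.rpow_nonneg (hz i hi) _
        · rwa [← mul_sum, one_div_mul_eq_div] at hamgm

theorem Matrix.det_sq_le_sum_sq_div_card_pow {ι : Type*} [Fintype ι] [DecidableEq ι]
    (A : Matrix ι ι ℝ) :
    A.det ^ 2 ≤ ((∑ i, ∑ j, A i j ^ 2) / Fintype.card ι) ^ Fintype.card ι := by
  have hB : (A * Aᵀ).PosSemidef := by
    simpa using posSemidef_self_mul_conjTranspose A
  have hdet : A.det ^ 2 = ∏ i, hB.1.eigenvalues i := by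
    simpa [det_mul, sq] using hB.1.det_eq_prod_eigenvalues
  have htrace : ∑ i, hB.1.eigenvalues i = ∑ i, ∑ j, A i j ^ 2 := by
    simpa [trace, mul_apply, sq] using hB.1.trace_eq_sum_eigenvalues.symm
  rw [hdet, ← htrace, ← card_univ]
  exact Real.prod_le_sum_div_card_pow _ fun i _ => hB.eigenvalues_nonneg i

theorem Matrix.abs_det_le_one_of_sum_sq_le_card {ι : Type*} [Fintype ι] [DecidableEq ι]
    (A : Matrix ι ι ℝ) (h : ∑ i, ∑ j, A i j ^ 2 ≤ Fintype.card ι) : |A.det| ≤ 1 := by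
  refine (sq_le_one_iff_abs_le_one _).mp (A.det_sq_le_sum_sq_div_card_pow.trans ?_)
  exact pow_le_one₀ (by positivity) (div_le_one_of_le₀ h (Nat.cast_nonneg _))

section Bessel

variable {Ω : Type*} [MeasurableSpace Ω] {μ : Measure Ω}

theorem MeasureTheory.MemLp.inner_toLp {f g : Ω → ℝ} (hf : MemLp f 2 μ) (hg : MemLp g 2 μ) :
    inner ℝ (hf.toLp f) (hg.toLp g) = ∫ ω, f ω * g ω ∂μ := by
  rw [L2.inner_def]
  refine integral_congr_ae ?_
  filter_upwards [hf.coeFn_toLp, hg.coeFn_toLp] with ω hfω hgω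
  simp [hfω, hgω, mul_comm]

theorem sum_sq_integral_mul_le_integral_sq {ι : Type*} [Fintype ι] [DecidableEq ι]
    {δ : ι → Ω → ℝ} (hδ : ∀ i, MemLp (δ i) 2 μ)
    (horth : ∀ i j, ∫ ω, δ i ω * δ j ω ∂μ = if i = j then 1 else 0)
    {g : Ω → ℝ} (hg : MemLp g 2 μ) :
    ∑ i, (∫ ω, δ i ω * g ω ∂μ) ^ 2 ≤ ∫ ω, g ω ^ 2 ∂μ := by
  have horthonormal : Orthonormal ℝ fun i => (hδ i).toLp (δ i) := by
    rw [orthonormal_iff_ite]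
    intro i j
    rw [MemLp.inner_toLp, horth]
  have hbessel := horthonormal.sum_inner_products_le (s := univ) (hg.toLp g)
  simp only [MemLp.inner_toLp, Real.norm_eq_abs, sq_abs, ← real_inner_self_eq_norm_sq] at hbessel
  simpa only [sq] using hbessel

theorem sum_sq_integral_mul_apply_le_integral_norm_sq {ι κ : Type*} [Fintype ι] [DecidableEq ι]
    [Fintype κ] {δ : ι → Ω → ℝ} (hδ : ∀ i, MemLp (δ i) 2 μ)
    (horth : ∀ i j, ∫ ω, δ i ω * δ j ω ∂μ = if i = j then 1 else 0)
    {V : Ω → EuclideanSpace ℝ κ} (hV : MemLp V 2 μ) :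
    ∑ i, ∑ j, (∫ ω, δ i ω * V ω j ∂μ) ^ 2 ≤ ∫ ω, ‖V ω‖ ^ 2 ∂μ := by
  have hVcoord : ∀ j, MemLp (fun ω => V ω j) 2 μ := fun j =>
    (EuclideanSpace.proj j : EuclideanSpace ℝ κ →L[ℝ] ℝ).comp_memLp' hV
  simp only [EuclideanSpace.real_norm_sq_eq]
  rw [integral_finsetSum _ fun j _ => (hVcoord j).integrable_sq, sum_comm]
  exact sum_le_sum fun j _ => sum_sq_integral_mul_le_integral_sq hδ horth (hVcoord j)

end Bessel

theorem abs_det_le_one_general {Ω : Type*} [MeasurableSpace Ω] (μ : Measure Ω)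
    [IsProbabilityMeasure μ] (n : ℕ)
    (V : Ω → EuclideanSpace ℝ (Fin n)) (hVmeas : Measurable V)
    (hVnorm : ∀ᵐ ω ∂μ, ‖V ω‖ = 1)
    (δ : Fin n → Ω → ℝ) (hδ : ∀ i, MemLp (δ i) 2 μ)
    (horth : ∀ i j, (n : ℝ) * ∫ ω, δ i ω * δ j ω ∂μ = if i = j then 1 else 0)
    (A : Matrix (Fin n) (Fin n) ℝ)
    (hA : ∀ i j, A i j = (n : ℝ) * ∫ ω, δ i ω * V ω j ∂μ) :
    |A.det| ≤ 1 := by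
  set ν : Measure Ω := (n : ENNReal) • μ
  have hν : ∀ f : Ω → ℝ, ∫ ω, f ω ∂ν = n * ∫ ω, f ω ∂μ := fun f => by
    simp [ν, integral_smul_measure]
  have hV : MemLp V 2 μ :=
    MemLp.of_bound hVmeas.aestronglyMeasurable 1 (hVnorm.mono fun _ h => h.le)
  have hnormsq : ∫ ω, ‖V ω‖ ^ 2 ∂μ = 1 := by
    rw [integral_congr_ae (g := fun _ => 1) (hVnorm.mono fun ω h => by simp [h])]
    simp
  refine A.abs_det_le_one_of_sum_sq_le_card ?_
  calc ∑ i, ∑ j, A i j ^ 2 = ∑ i, ∑ j, (∫ ω, δ i ω * V ω j ∂ν) ^ 2 := by simp only [hA, hν]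
    _ ≤ ∫ ω, ‖V ω‖ ^ 2 ∂ν :=
        sum_sq_integral_mul_apply_le_integral_norm_sq
          (fun i => (hδ i).smul_measure (ENNReal.natCast_ne_top n))
          (fun i j => by rw [hν, horth]) (hV.smul_measure (ENNReal.natCast_ne_top n))
    _ = Fintype.card (Fin n) := by rw [hν, hnormsq, mul_one, Fintype.card_fin]

/-- Measure-theoretic core of Proposition 5.1(1): if `V : Ω → ℝⁿ` is a.e. a unit vector
and `δ₁,…,δₙ` are orthonormal for the inner product `⟨f,g⟩ = n∫ f·g dμ`, then the matrix
`A_{ij} = n∫ δᵢ·Vⱼ dμ` has `|det A| ≤ 1`. -/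
theorem abs_det_le_one {Ω : Type*} [MeasurableSpace Ω] (μ : Measure Ω)
    [IsProbabilityMeasure μ] (n : ℕ) (hn : 1 ≤ n)
    (V : Ω → EuclideanSpace ℝ (Fin n)) (hVmeas : Measurable V)
    (hVnorm : ∀ᵐ ω ∂μ, ‖V ω‖ = 1)
    (δ : Fin n → Ω → ℝ) (hδ : ∀ i, MemLp (δ i) 2 μ)
    (horth : ∀ i j, (n : ℝ) * ∫ ω, δ i ω * δ j ω ∂μ = if i = j then 1 else 0)
    (A : Matrix (Fin n) (Fin n) ℝ)
    (hA : ∀ i j, A i j = (n : ℝ) * ∫ ω, δ i ω * V ω j ∂μ) :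
    |A.det| ≤ 1 :=
  abs_det_le_one_general μ n V hVmeas hVnorm δ hδ horth A hA
end

section
/- For every integer n ≥ 1 there exists a constant c₀ = c₀(n) > 0 such that the following holds. Let (Ω, μ) be a probability space and V : Ω → ℝⁿ a measurable map with Euclidean norm ‖V(ω)‖ = 1 for μ-almost every ω. Let δ₁, …, δₙ be real-valued square-integrable functions on Ω that are orthonormal with respect to the inner product ⟨f, g⟩ := n·∫_Ω f·g dμ. Define the n×n matrix A by A_{ij} = n·∫_Ω δ_i(ω)·V_j(ω) dμ(ω), and define the vector E(δ₁) := n·∫_Ω δ₁(ω)·V(ω) dμ(ω) ∈ ℝⁿ. Then |det A| ≤ 1 − c₀·∫_Ω (δ₁(ω) − ⟨V(ω), E(δ₁)⟩)² dμ(ω), where ⟨·,·⟩ is the Euclidean inner product on ℝⁿ. -/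
/-!
In `L²(μ)` put `uᵢ = √n δᵢ` and `vⱼ = √n Vⱼ`. Then the `uᵢ` are orthonormal, `Aᵢⱼ = ⟪uᵢ, vⱼ⟫`,
`∑ ‖vⱼ‖² = n`, and `n ∫ (δ₁ - ⟪V, E⟫)² = ‖u₁ - ∑ⱼ A₁ⱼ vⱼ‖²`. Split each `vⱼ` into its projection
`∑ᵢ Aᵢⱼ uᵢ` onto the span of the `uᵢ` and a residual `rⱼ`; with `G = A Aᵀ` this gives
`‖u₁ - ∑ⱼ A₁ⱼ vⱼ‖² = ∑ₖ (1 - G)₁ₖ² + ‖∑ⱼ A₁ⱼ rⱼ‖² ≤ ‖1 - G‖²_F + n (n - tr G)`,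
since `∑ ‖rⱼ‖² = n - tr G` by Bessel. In terms of the eigenvalues `λᵢ ≥ 0` of `G`, where
`∑ λᵢ ≤ n` and `∏ λᵢ = (det A)²`, the right-hand side is `∑ (λᵢ - 1)² + n (n - ∑ λᵢ)`, and the
quantitative AM-GM bound `λ ≤ exp (λ - 1 - (λ - 1)² / (2 (n + 1)))` shows that
`1 - (det A)²` dominates it up to a constant depending only on `n`.
-/

open MeasureTheory Matrix Finset Real
open scoped RealInnerProductSpace

theorem Real.sq_sub_one_le_two_mul_add_one_mul_sub_log {x : ℝ} (hx : 0 < x) :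
    (x - 1) ^ 2 ≤ 2 * (x + 1) * (x - 1 - log x) := by
  have hs := sq_sqrt hx.le
  have hlog : log x ≤ 2 * (√x - 1) := by
    have := log_le_sub_one_of_pos (sqrt_pos.mpr hx)
    rw [log_sqrt hx.le] at this
    linarith
  have hsq : (x - 1) ^ 2 = (√x - 1) ^ 2 * (√x + 1) ^ 2 := by
    linear_combination (-(x - 1) - (√x ^ 2 - 1)) * hs
  have hplus : (√x + 1) ^ 2 ≤ 2 * (x + 1) := by nlinarith [sq_nonneg (√x - 1)]
  calc (x - 1) ^ 2 = (√x - 1) ^ 2 * (√x + 1) ^ 2 := hsq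
    _ ≤ (x - 1 - log x) * (2 * (x + 1)) := by
        gcongr
        · nlinarith [log_le_sub_one_of_pos hx]
        · nlinarith
    _ = _ := by ring

theorem Real.le_exp_sub_one_sub_sq_div {x M : ℝ} (hx : 0 ≤ x) (hxM : x ≤ M) :
    x ≤ exp (x - 1 - (x - 1) ^ 2 / (2 * (M + 1))) := by
  rcases hx.eq_or_lt with rfl | hx
  · positivity
  rw [← exp_log hx, exp_le_exp, exp_log hx]
  have h := sq_sub_one_le_two_mul_add_one_mul_sub_log hx
  have : (x - 1) ^ 2 / (2 * (M + 1)) ≤ (x - 1) ^ 2 / (2 * (x + 1)) := by gcongr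
  have : (x - 1) ^ 2 / (2 * (x + 1)) ≤ x - 1 - log x := by
    rw [div_le_iff₀ (by positivity)]; linarith
  linarith

theorem Real.le_one_add_mul_one_sub_exp_neg (q : ℝ) : q ≤ (1 + q) * (1 - exp (-q)) := by
  have h1 := add_one_le_exp q
  have h2 : exp q * exp (-q) = 1 := by rw [← exp_add]; simp
  nlinarith [exp_pos (-q)]

theorem Finset.prod_le_exp_neg {ι : Type*} [Fintype ι] {l : ι → ℝ} {M : ℝ}
    (h0 : ∀ i, 0 ≤ l i) (hM : ∀ i, l i ≤ M) :
    ∏ i, l i ≤ exp (-((Fintype.card ι - ∑ i, l i) + (∑ i, (l i - 1) ^ 2) / (2 * (M + 1)))) := by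
  calc ∏ i, l i ≤ ∏ i, exp (l i - 1 - (l i - 1) ^ 2 / (2 * (M + 1))) :=
        prod_le_prod (fun i _ => h0 i) fun i _ => le_exp_sub_one_sub_sq_div (h0 i) (hM i)
    _ = _ := by
        rw [← exp_sum]; congr 1
        simp only [sum_sub_distrib, sum_div, sum_const, card_univ, nsmul_eq_mul, mul_one]
        ring

theorem Finset.sum_sq_sub_one_add_card_mul_le {ι : Type*} [Fintype ι] {l : ι → ℝ}
    (h0 : ∀ i, 0 ≤ l i) (hsum : ∑ i, l i ≤ Fintype.card ι) :
    ∑ i, (l i - 1) ^ 2 + Fintype.card ι * (Fintype.card ι - ∑ i, l i) ≤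
      2 * (Fintype.card ι + 1) * (1 + (Fintype.card ι + 1) ^ 2) * (1 - ∏ i, l i) := by
  set n : ℝ := (Fintype.card ι : ℝ)
  set D := n - ∑ i, l i
  set F := ∑ i, (l i - 1) ^ 2
  set Q := D + F / (2 * (n + 1)) with hQ
  have hn : 0 ≤ n := Nat.cast_nonneg _
  have hle : ∀ i, l i ≤ n := fun i => (single_le_sum (fun j _ => h0 j) (mem_univ i)).trans hsum
  have hD : 0 ≤ D := sub_nonneg.mpr hsum
  have hF : F ≤ n * (n + 1) ^ 2 := by
    calc F ≤ ∑ _i : ι, (n + 1) ^ 2 := sum_le_sum fun i _ => by nlinarith [h0 i, hle i]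
      _ = n * (n + 1) ^ 2 := by simp [n]
  have hQ0 : 0 ≤ Q := by positivity
  have hQmax : Q ≤ (n + 1) ^ 2 := by
    have : D ≤ n := sub_le_self _ (sum_nonneg fun i _ => h0 i)
    have : F / (2 * (n + 1)) ≤ n * (n + 1) / 2 := by
      rw [div_le_iff₀ (by positivity)]; nlinarith
    nlinarith
  have hprod : ∏ i, l i ≤ exp (-Q) := prod_le_exp_neg h0 hle
  have hQprod : Q ≤ (1 + Q) * (1 - ∏ i, l i) :=
    (le_one_add_mul_one_sub_exp_neg Q).trans (by gcongr)
  have hprod1 : 0 ≤ 1 - ∏ i, l i := by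
    by_contra! h; nlinarith
  calc F + n * D ≤ 2 * (n + 1) * Q := by
        rw [hQ, mul_add, mul_div_cancel₀ _ (by positivity)]; nlinarith
    _ ≤ 2 * (n + 1) * ((1 + (n + 1) ^ 2) * (1 - ∏ i, l i)) := by
        gcongr; exact hQprod.trans (by gcongr)
    _ = _ := by ring

namespace Matrix
variable {ι : Type*} [Fintype ι]

theorem IsHermitian.trace_one_sub_mul_one_sub [DecidableEq ι] {G : Matrix ι ι ℝ}
    (hG : G.IsHermitian) :
    ((1 - G) * (1 - G)).trace = ∑ i, (1 - hG.eigenvalues i) ^ 2 := by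
  conv_lhs => rw [hG.spectral_theorem]
  rw [← map_one (Unitary.conjStarAlgAut ℝ _ hG.eigenvectorUnitary), ← map_sub,
    ← map_mul, Unitary.conjStarAlgAut_apply, trace_mul_cycle, Unitary.coe_star_mul_self, one_mul]
  simp [← diagonal_one, diagonal_sub, diagonal_mul_diagonal, sq]

theorem trace_mul_transpose_self {R : Type*} [Semiring R] (A : Matrix ι ι R) :
    (A * Aᵀ).trace = ∑ i, ∑ j, A i j ^ 2 := by
  simp only [trace, Matrix.diag, mul_apply, transpose_apply, sq]

theorem IsSymm.sum_sq_apply_le_trace_mul_self {B : Matrix ι ι ℝ} (hB : B.IsSymm) (i₀ : ι) :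
    ∑ k, B i₀ k ^ 2 ≤ (B * B).trace := by
  have hrow : ∀ i, (B * B) i i = ∑ k, B i k ^ 2 := fun i => by
    simp only [mul_apply, sq]
    exact sum_congr rfl fun k _ => by rw [hB.apply k i]
  rw [trace, ← hrow]
  exact single_le_sum (f := fun i => (B * B) i i) (fun i _ => by rw [hrow]; positivity)
    (mem_univ i₀)

theorem trace_one_sub_sq_add_card_mul_le [DecidableEq ι] (A : Matrix ι ι ℝ)
    (htr : (A * Aᵀ).trace ≤ Fintype.card ι) :
    ((1 - A * Aᵀ) * (1 - A * Aᵀ)).trace + Fintype.card ι * (Fintype.card ι - (A * Aᵀ).trace) ≤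
      4 * (Fintype.card ι + 1) * (1 + (Fintype.card ι + 1) ^ 2) * (1 - |A.det|) := by
  have hG : (A * Aᵀ).PosSemidef := by
    simpa using posSemidef_self_mul_conjTranspose A
  have htrace : (A * Aᵀ).trace = ∑ i, hG.1.eigenvalues i := by
    simpa using hG.1.trace_eq_sum_eigenvalues
  have hdet : A.det ^ 2 = ∏ i, hG.1.eigenvalues i := by
    have h := hG.1.det_eq_prod_eigenvalues
    rw [det_mul, det_transpose] at h
    simpa [sq] using h
  have hscalar := sum_sq_sub_one_add_card_mul_le hG.eigenvalues_nonneg (htrace ▸ htr)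
  rw [hG.1.trace_one_sub_mul_one_sub, htrace]
  have hsq : ∀ i, (1 - hG.1.eigenvalues i) ^ 2 = (hG.1.eigenvalues i - 1) ^ 2 := fun i => by ring
  simp only [hsq, ← hdet] at hscalar ⊢
  have habs : 1 - A.det ^ 2 ≤ 2 * (1 - |A.det|) := by
    nlinarith [sq_abs A.det, sq_nonneg (1 - |A.det|)]
  calc _ ≤ _ := hscalar
    _ ≤ 2 * (Fintype.card ι + 1) * (1 + (Fintype.card ι + 1) ^ 2) * (2 * (1 - |A.det|)) := by
        gcongr
    _ = _ := by ring

end Matrix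

namespace MeasureTheory
variable {Ω : Type*} [MeasurableSpace Ω] {μ : Measure Ω}

theorem MemLp.toLp_finsetSum {E : Type*} [NormedAddCommGroup E] {p : ENNReal} {ι : Type*}
    (s : Finset ι) {f : ι → Ω → E} (hf : ∀ i, MemLp (f i) p μ) :
    (memLp_finsetSum' s fun i _ => hf i).toLp (∑ i ∈ s, f i) = ∑ i ∈ s, (hf i).toLp (f i) := by
  induction s using Finset.cons_induction with
  | empty => simp
  | cons a s ha ih => simp only [sum_cons, ← ih]; rfl

theorem L2.inner_toLp_eq_integral_mul {f g : Ω → ℝ} (hf : MemLp f 2 μ) (hg : MemLp g 2 μ) :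
    ⟪hf.toLp f, hg.toLp g⟫ = ∫ ω, f ω * g ω ∂μ := by
  rw [L2.inner_def]
  refine integral_congr_ae ?_
  filter_upwards [hf.coeFn_toLp, hg.coeFn_toLp] with ω hfω hgω
  simp [hfω, hgω, mul_comm]

theorem L2.norm_toLp_sq {f : Ω → ℝ} (hf : MemLp f 2 μ) :
    ‖hf.toLp f‖ ^ 2 = ∫ ω, f ω ^ 2 ∂μ := by
  rw [← real_inner_self_eq_norm_sq, L2.inner_toLp_eq_integral_mul]
  simp [sq]

theorem _root_.EuclideanSpace.integral_apply {ι : Type*} [Fintype ι]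
    {W : Ω → EuclideanSpace ℝ ι} (hW : Integrable W μ) (j : ι) : (∫ ω, W ω ∂μ) j = ∫ ω, W ω j ∂μ :=
  ((EuclideanSpace.proj j).integral_comp_comm hW).symm

theorem MemLp.euclideanSpace_apply {ι : Type*} [Fintype ι] {p : ENNReal}
    {V : Ω → EuclideanSpace ℝ ι} (hV : MemLp V p μ) (j : ι) : MemLp (fun ω => V ω j) p μ :=
  (EuclideanSpace.proj (𝕜 := ℝ) j : EuclideanSpace ℝ ι →L[ℝ] ℝ).comp_memLp' hV

theorem sum_integral_apply_sq_eq_integral_norm_sq {ι : Type*} [Fintype ι]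
    {V : Ω → EuclideanSpace ℝ ι} (hV : MemLp V 2 μ) :
    ∑ j, ∫ ω, V ω j ^ 2 ∂μ = ∫ ω, ‖V ω‖ ^ 2 ∂μ := by
  rw [← integral_finsetSum _ fun j _ => (hV.euclideanSpace_apply j).integrable_sq]
  simp [EuclideanSpace.real_norm_sq_eq]

end MeasureTheory

section InnerProductSpace
variable {F : Type*} [NormedAddCommGroup F] [InnerProductSpace ℝ F] {ι : Type*} [Fintype ι]
  {u : ι → F}

theorem Orthonormal.norm_sum_smul_sq (hu : Orthonormal ℝ u) (c : ι → ℝ) :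
    ‖∑ k, c k • u k‖ ^ 2 = ∑ k, c k ^ 2 := by
  rw [← real_inner_self_eq_norm_sq, hu.inner_sum]
  simp [sq]

theorem norm_sum_smul_sq_le (a : ι → ℝ) (r : ι → F) :
    ‖∑ j, a j • r j‖ ^ 2 ≤ (∑ j, a j ^ 2) * ∑ j, ‖r j‖ ^ 2 := by
  calc ‖∑ j, a j • r j‖ ^ 2 ≤ (∑ j, |a j| * ‖r j‖) ^ 2 := by
        gcongr
        exact (norm_sum_le _ _).trans_eq (by simp [norm_smul])
    _ ≤ (∑ j, |a j| ^ 2) * ∑ j, ‖r j‖ ^ 2 := sum_mul_sq_le_sq_mul_sq _ _ _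
    _ = _ := by simp

theorem Orthonormal.inner_sub_sum_inner_smul (hu : Orthonormal ℝ u) (x : F) (i : ι) :
    ⟪u i, x - ∑ k, ⟪u k, x⟫ • u k⟫ = 0 := by
  rw [inner_sub_right, hu.inner_right_fintype, sub_self]

theorem Orthonormal.norm_sub_sum_inner_smul_sq (hu : Orthonormal ℝ u) (x : F) :
    ‖x - ∑ k, ⟪u k, x⟫ • u k‖ ^ 2 = ‖x‖ ^ 2 - ∑ k, ⟪u k, x⟫ ^ 2 := by
  have horth : ⟪∑ k, ⟪u k, x⟫ • u k, x - ∑ k, ⟪u k, x⟫ • u k⟫ = 0 := by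
    simp [sum_inner, inner_smul_left, hu.inner_sub_sum_inner_smul]
  have h := norm_add_sq_real (∑ k, ⟪u k, x⟫ • u k) (x - ∑ k, ⟪u k, x⟫ • u k)
  rw [add_sub_cancel, horth, hu.norm_sum_smul_sq] at h
  linarith

variable {v : ι → F} {A : Matrix ι ι ℝ}

theorem Orthonormal.trace_mul_transpose_le (hu : Orthonormal ℝ u)
    (hA : ∀ i j, A i j = ⟪u i, v j⟫) : (A * Aᵀ).trace ≤ ∑ j, ‖v j‖ ^ 2 := by
  rw [trace_mul_transpose_self, sum_comm]
  simp only [hA]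
  refine sum_le_sum fun j _ => ?_
  simpa using hu.sum_inner_products_le (s := univ) (v j)

theorem Orthonormal.norm_sub_sum_smul_sq_le [DecidableEq ι] (hu : Orthonormal ℝ u)
    (hA : ∀ i j, A i j = ⟪u i, v j⟫) (i₀ : ι) :
    ‖u i₀ - ∑ j, A i₀ j • v j‖ ^ 2 ≤
      ∑ k, (1 - A * Aᵀ) i₀ k ^ 2 + (A * Aᵀ) i₀ i₀ * (∑ j, ‖v j‖ ^ 2 - (A * Aᵀ).trace) := by
  set r : ι → F := fun j => v j - ∑ k, ⟪u k, v j⟫ • u k with hr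
  set w : F := ∑ k, (1 - A * Aᵀ) i₀ k • u k
  set ρ : F := ∑ j, A i₀ j • r j
  have hdecomp : u i₀ - ∑ j, A i₀ j • v j = w - ρ := by
    have hv : ∑ j, A i₀ j • v j = ∑ k, (A * Aᵀ) i₀ k • u k + ρ := by
      simp only [ρ, hr, smul_sub, sum_sub_distrib, smul_sum, smul_smul, mul_apply,
        transpose_apply, sum_smul, hA]
      rw [sum_comm]
      abel
    have hw : w = u i₀ - ∑ k, (A * Aᵀ) i₀ k • u k := by
      simp [w, sub_smul, sum_sub_distrib, one_apply]
    rw [hv, hw]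
    abel
  have hwρ : ⟪w, ρ⟫ = 0 := by
    simp [w, ρ, sum_inner, inner_sum, inner_smul_left, inner_smul_right, hr,
      hu.inner_sub_sum_inner_smul]
  have hρ : ‖ρ‖ ^ 2 ≤ (A * Aᵀ) i₀ i₀ * (∑ j, ‖v j‖ ^ 2 - (A * Aᵀ).trace) := by
    have hdiag : (A * Aᵀ) i₀ i₀ = ∑ j, A i₀ j ^ 2 := by simp [mul_apply, sq]
    have hres : ∑ j, ‖r j‖ ^ 2 = ∑ j, ‖v j‖ ^ 2 - (A * Aᵀ).trace := by
      simp only [hr, hu.norm_sub_sum_inner_smul_sq, sum_sub_distrib, trace_mul_transpose_self,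
        hA]
      rw [sum_comm (f := fun i j => ⟪u i, v j⟫ ^ 2)]
    rw [hdiag, ← hres]
    exact norm_sum_smul_sq_le _ _
  rw [hdecomp, norm_sub_sq_real, hwρ, hu.norm_sum_smul_sq]
  linarith

theorem Orthonormal.norm_sub_sum_smul_sq_le_mul_one_sub_abs_det [DecidableEq ι]
    (hu : Orthonormal ℝ u)
    (hA : ∀ i j, A i j = ⟪u i, v j⟫) (hv : ∑ j, ‖v j‖ ^ 2 = Fintype.card ι) (i₀ : ι) :
    ‖u i₀ - ∑ j, A i₀ j • v j‖ ^ 2 ≤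
      4 * (Fintype.card ι + 1) * (1 + (Fintype.card ι + 1) ^ 2) * (1 - |A.det|) := by
  have htr : (A * Aᵀ).trace ≤ Fintype.card ι := hv ▸ hu.trace_mul_transpose_le hA
  have hdiag : (A * Aᵀ) i₀ i₀ ≤ Fintype.card ι :=
    (single_le_sum (f := fun i => (A * Aᵀ) i i)
      (fun i _ => by simp only [mul_apply, transpose_apply, ← sq]; positivity)
      (mem_univ i₀)).trans htr
  have hrow := (isSymm_one.sub (isSymm_mul_transpose_self A)).sum_sq_apply_le_trace_mul_self i₀
  calc ‖u i₀ - ∑ j, A i₀ j • v j‖ ^ 2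
      ≤ ∑ k, (1 - A * Aᵀ) i₀ k ^ 2 + (A * Aᵀ) i₀ i₀ * (∑ j, ‖v j‖ ^ 2 - (A * Aᵀ).trace) :=
        hu.norm_sub_sum_smul_sq_le hA i₀
    _ ≤ ((1 - A * Aᵀ) * (1 - A * Aᵀ)).trace
          + Fintype.card ι * (Fintype.card ι - (A * Aᵀ).trace) := by
        rw [hv]; gcongr
    _ ≤ _ := trace_one_sub_sq_add_card_mul_le A htr

end InnerProductSpace

theorem integral_sq_sub_sum_mul_le_mul_one_sub_abs_det {Ω : Type*} [MeasurableSpace Ω]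
    {μ : Measure Ω} {ι : Type*} [Fintype ι] [DecidableEq ι] {c : ℝ} (hc : 0 ≤ c)
    {δ w : ι → Ω → ℝ} (hδ : ∀ i, MemLp (δ i) 2 μ) (hw : ∀ j, MemLp (w j) 2 μ)
    (horth : ∀ i j, c * ∫ ω, δ i ω * δ j ω ∂μ = if i = j then 1 else 0)
    {A : Matrix ι ι ℝ} (hA : ∀ i j, A i j = c * ∫ ω, δ i ω * w j ω ∂μ)
    (hw2 : c * ∑ j, ∫ ω, w j ω ^ 2 ∂μ = Fintype.card ι) (i₀ : ι) :
    c * ∫ ω, (δ i₀ ω - ∑ j, A i₀ j * w j ω) ^ 2 ∂μ ≤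
      4 * (Fintype.card ι + 1) * (1 + (Fintype.card ι + 1) ^ 2) * (1 - |A.det|) := by
  set u : ι → Lp ℝ 2 μ := fun i => √c • (hδ i).toLp (δ i)
  set v : ι → Lp ℝ 2 μ := fun j => √c • (hw j).toLp (w j)
  have hsqrt : √c * √c = c := mul_self_sqrt hc
  have hu : Orthonormal ℝ u := by
    rw [orthonormal_iff_ite]
    intro i j
    simp only [u, real_inner_smul_left, real_inner_smul_right, L2.inner_toLp_eq_integral_mul,
      ← mul_assoc, hsqrt, horth]
  have hAuv : ∀ i j, A i j = ⟪u i, v j⟫ := fun i j => by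
    simp only [u, v, real_inner_smul_left, real_inner_smul_right, L2.inner_toLp_eq_integral_mul,
      ← mul_assoc, hsqrt, hA]
  have hv : ∑ j, ‖v j‖ ^ 2 = Fintype.card ι := by
    simp only [v, norm_smul, mul_pow, L2.norm_toLp_sq, ← mul_sum, norm_eq_abs, sq_abs,
      sq_sqrt hc, hw2]
  have hg := (hδ i₀).sub (memLp_finsetSum' univ fun j _ => (hw j).const_smul (A i₀ j))
  have huv : u i₀ - ∑ j, A i₀ j • v j = √c • hg.toLp _ := by
    simp only [u, v, smul_comm (A _ _), ← smul_sum, ← smul_sub, ← MemLp.toLp_const_smul,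
      ← MemLp.toLp_finsetSum, ← MemLp.toLp_sub]
  have key := hu.norm_sub_sum_smul_sq_le_mul_one_sub_abs_det hAuv hv i₀
  rw [huv, norm_smul, mul_pow, L2.norm_toLp_sq, norm_eq_abs, sq_abs, sq_sqrt hc] at key
  simpa using key

/-- Measure-theoretic core of Proposition 5.3: for every `n ≥ 1` there is `c₀ = c₀(n) > 0`
such that for any probability space `(Ω,μ)`, any a.e. unit vector field `V : Ω → ℝⁿ`, and
any family `δ₁,…,δₙ` orthonormal for `⟨f,g⟩ = n∫ f·g dμ`, the matrix
`A_{ij} = n∫ δᵢ·Vⱼ dμ` and the vector `E(δ₁) = n∫ δ₁·V dμ` satisfy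
`|det A| ≤ 1 − c₀·∫ (δ₁ − ⟨V, E(δ₁)⟩)² dμ`. -/
theorem abs_det_quantitative (n : ℕ) (hn : 1 ≤ n) :
    ∃ c₀ > (0 : ℝ),
      ∀ (Ω : Type) (_ : MeasurableSpace Ω) (μ : Measure Ω), IsProbabilityMeasure μ →
      ∀ (V : Ω → EuclideanSpace ℝ (Fin n)), Measurable V →
      (∀ᵐ ω ∂μ, ‖V ω‖ = 1) →
      ∀ (δ : Fin n → Ω → ℝ), (∀ i, MemLp (δ i) 2 μ) →
      (∀ i j, (n : ℝ) * ∫ ω, δ i ω * δ j ω ∂μ = if i = j then 1 else 0) →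
      ∀ (A : Matrix (Fin n) (Fin n) ℝ),
        (∀ i j, A i j = (n : ℝ) * ∫ ω, δ i ω * V ω j ∂μ) →
      ∀ (E : EuclideanSpace ℝ (Fin n)),
        E = (n : ℝ) • ∫ ω, δ ⟨0, hn⟩ ω • V ω ∂μ →
      |A.det| ≤ 1 - c₀ * ∫ ω, (δ ⟨0, hn⟩ ω - (inner ℝ (V ω) E : ℝ)) ^ 2 ∂μ := by
  refine ⟨(4 * (n + 1) * (1 + (n + 1) ^ 2))⁻¹, by positivity, ?_⟩
  intro Ω _ μ _ V hV hV1 δ hδ horth A hA E hE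
  have hVtop : MemLp V ⊤ μ :=
    memLp_top_of_bound hV.aestronglyMeasurable 1 (hV1.mono fun ω h => h.le)
  have hVE : ∀ ω, ⟪V ω, E⟫ = ∑ j, A ⟨0, hn⟩ j * V ω j := fun ω => by
    have hint : Integrable (fun ω => δ ⟨0, hn⟩ ω • V ω) μ :=
      ((hδ _).integrable one_le_two).smul_of_top_left hVtop
    simp [hE, PiLp.inner_apply, EuclideanSpace.integral_apply hint, hA, mul_comm]
  have hV2 : (n : ℝ) * ∑ j, ∫ ω, V ω j ^ 2 ∂μ = Fintype.card (Fin n) := by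
    rw [sum_integral_apply_sq_eq_integral_norm_sq (hVtop.mono_exponent le_top),
      integral_congr_ae (g := fun _ => (1 : ℝ)) (hV1.mono fun ω h => by simp [h])]
    simp
  have key := integral_sq_sub_sum_mul_le_mul_one_sub_abs_det n.cast_nonneg hδ
    (hVtop.mono_exponent le_top).euclideanSpace_apply horth hA hV2 ⟨0, hn⟩
  simp only [← hVE, Fintype.card_fin] at key
  have hT0 : 0 ≤ ∫ ω, (δ ⟨0, hn⟩ ω - ⟪V ω, E⟫) ^ 2 ∂μ := integral_nonneg fun ω => sq_nonneg _
  have hn1 : (1 : ℝ) ≤ n := by exact_mod_cast hn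
  rw [← le_sub_comm, inv_mul_le_iff₀ (by positivity)]
  nlinarith
end

section
/- Let H be a real Hilbert space, n ≥ 1 an integer, E an n-dimensional real inner product space, and L : H → E a bounded (continuous) linear map that is surjective. Let K = (ker L)^⊥ be the orthogonal complement of the kernel of L, and let z₁, …, zₙ be an orthonormal basis of K. Then for every orthonormal family y₁, …, yₙ in H, det( (⟨L y_i, L y_j⟩_E)_{i,j=1}^n ) ≤ det( (⟨L z_i, L z_j⟩_E)_{i,j=1}^n ). In other words, among all n-dimensional subspaces Y ⊆ H, the n-dimensional volume expansion (Gram determinant) of the restriction L|_Y is maximized when Y = (ker L)^⊥. -/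
/-!
Since `(ker L)ᗮᗮ = ker L`, the map `L` factors through the orthogonal projection onto
`K = span z`, so `L yᵢ = ∑ₖ cᵢₖ L zₖ` with `cᵢₖ = ⟪zₖ, yᵢ⟫`. Hence the Gram matrix of the `L yᵢ`
is `C G Cᵀ`, where `G` is that of the `L zₖ`, and its determinant is `(det C)² det G`. Finally
`C Cᵀ` is the Gram matrix of the projections of the `yᵢ`, and the Gram matrix of the
remainders is `1 - C Cᵀ`; both are positive semidefinite, so `(det C)² = det (C Cᵀ) ≤ 1`.
-/

open Matrix Submodule Set

namespace Matrix

variable {ι κ E : Type*}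

lemma gram_sum_smul [Fintype ι] [SeminormedAddCommGroup E] [InnerProductSpace ℝ E]
    (C : Matrix κ ι ℝ) (v : ι → E) :
    gram ℝ (fun i => ∑ k, C i k • v k) = C * gram ℝ v * Cᵀ := by
  ext i j
  simp only [gram_apply, mul_apply, transpose_apply, sum_inner, inner_sum, real_inner_smul_left,
    real_inner_smul_right, Finset.sum_mul]
  exact Finset.sum_congr rfl fun k _ => Finset.sum_congr rfl fun l _ => by ring

lemma gram_add_of_inner_eq_zero {𝕜 : Type*} [RCLike 𝕜] [SeminormedAddCommGroup E]
    [InnerProductSpace 𝕜 E] {u v : ι → E} (h : ∀ i j, inner 𝕜 (u i) (v j) = 0) :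
    gram 𝕜 (u + v) = gram 𝕜 u + gram 𝕜 v := by
  ext i j
  have h' : inner 𝕜 (v i) (u j) = 0 := by rw [← inner_conj_symm, h, map_zero]
  simp [inner_add_left, inner_add_right, h, h']

lemma PosSemidef.det_le_one [Fintype ι] [DecidableEq ι] {M : Matrix ι ι ℝ} (hM : M.PosSemidef)
    (h : (1 - M).PosSemidef) : M.det ≤ 1 := by
  rw [hM.isHermitian.det_eq_prod_eigenvalues]
  refine Finset.prod_le_one (fun i _ => hM.eigenvalues_nonneg i) fun i _ => ?_
  have hmem : 1 - hM.isHermitian.eigenvalues i ∈ spectrum ℝ (1 - M) := by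
    rw [← map_one (algebraMap ℝ (Matrix ι ι ℝ)), ← spectrum.singleton_sub_eq]
    exact Set.sub_mem_sub rfl (hM.isHermitian.eigenvalues_mem_spectrum_real i)
  simpa using (posSemidef_iff_isHermitian_and_spectrum_nonneg.1 h).2 hmem

end Matrix

section Orthonormal

variable {ι H : Type*} [Fintype ι]

lemma Orthonormal.sub_sum_inner_smul_mem_orthogonal {𝕜 : Type*} [RCLike 𝕜]
    [NormedAddCommGroup H] [InnerProductSpace 𝕜 H] {z : ι → H} (hz : Orthonormal 𝕜 z) (x : H) :
    x - ∑ k, inner 𝕜 (z k) x • z k ∈ (span 𝕜 (range z))ᗮ := by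
  have hzk : ∀ k, z k ∈ (𝕜 ∙ (x - ∑ k, inner 𝕜 (z k) x • z k))ᗮ := fun k => by
    rw [mem_orthogonal_singleton_iff_inner_left, inner_sub_right, hz.inner_right_fintype, sub_self]
  exact (mem_orthogonal _ _).2 fun u hu =>
    mem_orthogonal_singleton_iff_inner_left.1 (span_le.2 (range_subset_iff.2 hzk) hu)

variable [NormedAddCommGroup H] [InnerProductSpace ℝ H]

lemma Orthonormal.det_inner_sq_le_one [DecidableEq ι] {y z : ι → H} (hy : Orthonormal ℝ y)
    (hz : Orthonormal ℝ z) : (of fun i k => inner ℝ (z k) (y i)).det ^ 2 ≤ 1 := by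
  set C : Matrix ι ι ℝ := of fun i k => inner ℝ (z k) (y i)
  set w : ι → H := fun i => ∑ k, C i k • z k
  have hw : gram ℝ w = C * Cᵀ := by
    rw [gram_sum_smul, gram_eq_one_iff_orthonormal.2 hz, Matrix.mul_one]
  have hperp : ∀ i j, inner ℝ (w i) ((y - w) j) = 0 := fun i j =>
    inner_right_of_mem_orthogonal
      (sum_mem fun k _ => smul_mem _ _ (subset_span (mem_range_self k)))
      (hz.sub_sum_inner_smul_mem_orthogonal (y j))
  have hsplit : 1 = gram ℝ w + gram ℝ (y - w) := by
    rw [← gram_add_of_inner_eq_zero hperp, add_sub_cancel, gram_eq_one_iff_orthonormal.2 hy]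
  have hle : (C * Cᵀ).det ≤ 1 := by
    refine hw ▸ PosSemidef.det_le_one (posSemidef_gram ℝ w) ?_
    rw [hsplit, add_sub_cancel_left]
    exact posSemidef_gram ℝ _
  rwa [det_mul, det_transpose, ← sq] at hle

end Orthonormal

lemma ContinuousLinearMap.map_eq_sum_inner_smul {ι H F : Type*} [Fintype ι]
    [NormedAddCommGroup H] [InnerProductSpace ℝ H] [CompleteSpace H]
    [NormedAddCommGroup F] [NormedSpace ℝ F] (L : H →L[ℝ] F) {z : ι → H} (hz : Orthonormal ℝ z)
    (hspan : span ℝ (range z) = (LinearMap.ker (L : H →ₗ[ℝ] F))ᗮ) (x : H) :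
    L x = ∑ k, inner ℝ (z k) x • L (z k) := by
  have : CompleteSpace (LinearMap.ker (L : H →ₗ[ℝ] F)) := L.isClosed_ker.completeSpace_coe
  have hker := hz.sub_sum_inner_smul_mem_orthogonal x
  rw [hspan, orthogonal_orthogonal, LinearMap.mem_ker, ContinuousLinearMap.coe_coe, map_sub,
    sub_eq_zero] at hker
  simp [hker]

theorem gram_det_maximized_on_ker_orthogonal_general
    {H : Type*} [NormedAddCommGroup H] [InnerProductSpace ℝ H] [CompleteSpace H]
    {E : Type*} [NormedAddCommGroup E] [InnerProductSpace ℝ E]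
    (n : ℕ)
    (L : H →L[ℝ] E)
    (z : Fin n → H) (hz : Orthonormal ℝ z)
    (hspan : Submodule.span ℝ (Set.range z) = (LinearMap.ker (L : H →ₗ[ℝ] E))ᗮ)
    (y : Fin n → H) (hy : Orthonormal ℝ y) :
    Matrix.det (Matrix.of fun i j => (inner ℝ (L (y i)) (L (y j)) : ℝ)) ≤
      Matrix.det (Matrix.of fun i j => (inner ℝ (L (z i)) (L (z j)) : ℝ)) := by
  set C : Matrix (Fin n) (Fin n) ℝ := of fun i k => inner ℝ (z k) (y i)
  have hLy : (fun i => L (y i)) = fun i => ∑ k, C i k • L (z k) :=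
    funext fun i => L.map_eq_sum_inner_smul hz hspan (y i)
  change (gram ℝ fun i => L (y i)).det ≤ (gram ℝ fun i => L (z i)).det
  calc (gram ℝ fun i => L (y i)).det
      = C.det ^ 2 * (gram ℝ fun i => L (z i)).det := by
        rw [hLy, gram_sum_smul, det_mul, det_mul, det_transpose]; ring
    _ ≤ 1 * (gram ℝ fun i => L (z i)).det :=
        mul_le_mul_of_nonneg_right (hy.det_inner_sq_le_one hz) (posSemidef_gram ℝ _).det_nonneg
    _ = (gram ℝ fun i => L (z i)).det := one_mul _

/-- The claim after Definition 3.12 of the paper: for a surjective bounded linear map `L`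
from a real Hilbert space `H` onto an `n`-dimensional inner product space `E`, the Gram
determinant of `L` restricted to an `n`-dimensional subspace (computed on an orthonormal
basis) is maximized on `(ker L)ᗮ`. -/
theorem gram_det_maximized_on_ker_orthogonal
    {H : Type*} [NormedAddCommGroup H] [InnerProductSpace ℝ H] [CompleteSpace H]
    {E : Type*} [NormedAddCommGroup E] [InnerProductSpace ℝ E] [FiniteDimensional ℝ E]
    (n : ℕ) (hn : 1 ≤ n) (hE : Module.finrank ℝ E = n)
    (L : H →L[ℝ] E) (hL : Function.Surjective L)
    (z : Fin n → H) (hz : Orthonormal ℝ z)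
    (hzK : ∀ i, z i ∈ (LinearMap.ker (L : H →ₗ[ℝ] E))ᗮ)
    (hspan : Submodule.span ℝ (Set.range z) = (LinearMap.ker (L : H →ₗ[ℝ] E))ᗮ)
    (y : Fin n → H) (hy : Orthonormal ℝ y) :
    Matrix.det (Matrix.of fun i j => (inner ℝ (L (y i)) (L (y j)) : ℝ)) ≤
      Matrix.det (Matrix.of fun i j => (inner ℝ (L (z i)) (L (z j)) : ℝ)) :=
  gram_det_maximized_on_ker_orthogonal_general n L z hz hspan y hy
end
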